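/- arXiv:1205.0456 — 4 statements merged into one kernel-verified Lean document; each statement's English description precedes it below -/
import Mathlib

section
/- A monomial ideal I in K[x_0,...,x_n] (char K = 0) is Borel-fixed (fixed under the action of upper-triangular invertible matrices) if and only if for every monomial x^α in I and every pair of variables x_i dividing x^α and x_j > x_i, the monomial (x_j/x_i)·x^α also belongs to I. -/
/-!
A lower-triangular substitution sends `x_k` to a combination of the `x_a` with `a ≥ k`, so
expanding the image of `x^α` only ever moves exponents towards larger variables; the Borel
condition therefore makes a monomial ideal stable under every such substitution, and applying
this to `g` and `g⁻¹` gives equality. Conversely, the transvection `x_i ↦ x_i + x_j` sends `x^α` to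
`x^(α - α_i e_i) (x_i + x_j)^(α_i)`, in which `(x_j/x_i) x^α` has coefficient `α_i ≠ 0` in
characteristic zero; a monomial ideal contains every monomial in the support of its elements.
-/

open MvPolynomial Filter

noncomputable section

/-- The Hilbert function of `K[x_0,...,x_{m-1}]/I` in degree `t`. -/
def hilb {K : Type*} [Field K] (m : ℕ) (I : Ideal (MvPolynomial (Fin m) K)) (t : ℕ) : ℤ :=
  (Module.finrank K (MvPolynomial.homogeneousSubmodule (Fin m) K t) : ℤ) -
  (Module.finrank K
    (Submodule.restrictScalars K
        (I : Submodule (MvPolynomial (Fin m) K) (MvPolynomial (Fin m) K)) ⊓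
      MvPolynomial.homogeneousSubmodule (Fin m) K t :
        Submodule K (MvPolynomial (Fin m) K)) : ℤ)

/-- Saturation of `I` w.r.t. the irrelevant ideal: `I^sat = ⋃_k (I : (x_0,...,x_{m-1})^k)`. -/
def sat {K : Type*} [Field K] (m : ℕ) (I : Ideal (MvPolynomial (Fin m) K)) :
    Ideal (MvPolynomial (Fin m) K) :=
  ⨆ k : ℕ, Submodule.colon
    (I : Submodule (MvPolynomial (Fin m) K) (MvPolynomial (Fin m) K))
    (((Ideal.span (Set.range X)) ^ k : Ideal (MvPolynomial (Fin m) K)) :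
      Submodule (MvPolynomial (Fin m) K) (MvPolynomial (Fin m) K))

/-- The combinatorial Borel condition: `x^α ∈ I`, `x_i ∣ x^α`, `j > i` implies
`(x_j/x_i)·x^α ∈ I` (variables ordered `x_{m-1} > ... > x_0`). -/
def borelCond {K : Type*} [Field K] (m : ℕ) (I : Ideal (MvPolynomial (Fin m) K)) : Prop :=
  ∀ α : Fin m →₀ ℕ, monomial α (1:K) ∈ I → ∀ i j : Fin m, i < j → α i ≠ 0 →
    monomial (α - Finsupp.single i 1 + Finsupp.single j 1) (1:K) ∈ I

/-- `I` is a monomial ideal. -/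
def isMonomialIdeal {K : Type*} [Field K] (m : ℕ) (I : Ideal (MvPolynomial (Fin m) K)) : Prop :=
  ∃ S : Set (Fin m →₀ ℕ), I = Ideal.span ((fun α => monomial α (1:K)) '' S)

/-- Increasing elementary Borel move on exponent vectors: `β = (x_{i+1}/x_i)·α`. -/
def stepUp (n : ℕ) (α β : Fin (n+1) →₀ ℕ) : Prop :=
  ∃ i : Fin n, α i.castSucc ≠ 0 ∧
    β = α - Finsupp.single i.castSucc 1 + Finsupp.single i.succ 1

/-- Borel partial order: `borelGE n α β` means `α ≥_B β`. -/
def borelGE (n : ℕ) (α β : Fin (n+1) →₀ ℕ) : Prop :=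
  Relation.ReflTransGen (stepUp n) β α

/-- Rational binomial coefficient `C(x, k) = x(x-1)...(x-k+1)/k!`. -/
def qchoose (x : ℚ) (k : ℕ) : ℚ := (∏ i ∈ Finset.range k, (x - i)) / (Nat.factorial k)

/-- `Σ_{i=0}^{r-1} C(t + a_i - i, a_i)` for a list `l = [a_0, ..., a_{r-1}]`. -/
def gsum (l : List ℕ) (t : ℚ) : ℚ :=
  ((l.zipIdx.map Prod.swap).map (fun q => qchoose (t + (q.2 : ℚ) - (q.1 : ℚ)) q.2)).sum

/-- First difference operator on polynomials: `Δq(t) = q(t) - q(t-1)`. -/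
def dlt (q : Polynomial ℚ) : Polynomial ℚ := q - q.comp (Polynomial.X - 1)

section LinearSubst

variable {R σ : Type*} [CommSemiring R] [Fintype σ]

def linearSubst (g : Matrix σ σ R) : MvPolynomial σ R →ₐ[R] MvPolynomial σ R :=
  aeval fun j => ∑ i, g i j • X i

theorem linearSubst_X (g : Matrix σ σ R) (j : σ) :
    linearSubst g (X j) = ∑ i, g i j • X i :=
  aeval_X _ _

theorem linearSubst_comp (g h : Matrix σ σ R) :
    (linearSubst g).comp (linearSubst h) = linearSubst (g * h) := by
  refine algHom_ext fun k => ?_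
  simp only [AlgHom.comp_apply, linearSubst_X, map_sum, map_smul, Matrix.mul_apply,
    Finset.sum_smul, Finset.smul_sum, smul_smul]
  rw [Finset.sum_comm]
  simp only [mul_comm]

theorem linearSubst_one [DecidableEq σ] :
    linearSubst (1 : Matrix σ σ R) = AlgHom.id R (MvPolynomial σ R) :=
  algHom_ext fun k => by simp [linearSubst_X, Matrix.one_apply, ite_smul]

end LinearSubst

theorem Ideal.map_eq_self_of_comp_eq_id {R A : Type*} [CommSemiring R] [Semiring A]
    [Algebra R A] {I : Ideal A} {f g : A →ₐ[R] A} (hfg : f.comp g = AlgHom.id R A)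
    (hf : I.map f ≤ I) (hg : I.map g ≤ I) : I.map f = I := by
  refine le_antisymm hf ?_
  calc I = (I.map g).map f := by rw [Ideal.map_mapₐ, hfg, Ideal.map_idₐ]
    _ ≤ I.map f := Ideal.map_mono hg

theorem Matrix.inv_apply_eq_zero_of_lt {K σ : Type*} [Field K] [Fintype σ] [DecidableEq σ]
    [LinearOrder σ] {g : Matrix σ σ K} (hdet : IsUnit g.det)
    (htri : ∀ i j : σ, i < j → g i j = 0) {i j : σ} (hij : i < j) : g⁻¹ i j = 0 := by
  have := g.invertibleOfIsUnitDet hdet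
  exact Matrix.blockTriangular_inv_of_blockTriangular (b := OrderDual.toDual)
    (fun a b hab => htri a b hab) hij

theorem Matrix.transvection_apply_eq_zero_of_lt {R σ : Type*} [CommRing R] [DecidableEq σ]
    [LinearOrder σ] {i j : σ} (hij : i < j) (c : R) {a b : σ} (hab : a < b) :
    Matrix.transvection j i c a b = 0 := by
  have hji : ¬(j = a ∧ i = b) := fun h => (hij.trans_le (h.1 ▸ h.2 ▸ hab.le)).false
  simp [Matrix.transvection, Matrix.one_apply_ne hab.ne, hji]

section Transvection

variable {R σ : Type*} [CommRing R] [Fintype σ] [DecidableEq σ]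

theorem linearSubst_transvection_X (i j : σ) (c : R) (k : σ) :
    linearSubst (Matrix.transvection j i c) (X k) = if k = i then X i + c • X j else X k := by
  rw [linearSubst_X]
  rcases eq_or_ne k i with rfl | hk
  · simp [Matrix.transvection, Matrix.one_apply, Matrix.single_apply, add_smul, ite_smul,
      Finset.sum_add_distrib]
  · simp [Matrix.transvection, Matrix.one_apply, ite_smul, hk, hk.symm]

theorem linearSubst_transvection_monomial {i : σ} (j : σ) (c : R) {γ : σ →₀ ℕ} (hγ : γ i = 0)
    (a : ℕ) :
    linearSubst (Matrix.transvection j i c) (monomial (γ + Finsupp.single i a) 1) =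
      monomial γ 1 * (X i + c • X j) ^ a := by
  have hfix : linearSubst (Matrix.transvection j i c) (monomial γ 1) = monomial γ 1 := by
    conv_rhs => rw [← aeval_X_left_apply (monomial γ (1 : R))]
    refine eval₂_congr _ _ _ fun {k d} hk hd => ?_
    rw [coeff_monomial] at hd
    have hki : k ≠ i := by rintro rfl; simp_all
    exact (linearSubst_X _ k).symm.trans ((linearSubst_transvection_X i j c k).trans (if_neg hki))
  rw [monomial_add_single, map_mul, map_pow, hfix, linearSubst_transvection_X, if_pos rfl]

theorem coeff_X_add_X_pow {i j : σ} (hij : i ≠ j) (a : ℕ) :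
    coeff (Finsupp.single i (a - 1) + Finsupp.single j 1) ((X i + X j : MvPolynomial σ R) ^ a) =
      a := by
  rw [add_pow, coeff_sum]
  have hterm (k : ℕ) :
      (X i : MvPolynomial σ R) ^ k * X j ^ (a - k) * ((a.choose k : ℕ) : MvPolynomial σ R) =
      monomial (Finsupp.single i k + Finsupp.single j (a - k)) (a.choose k : R) := by
    rw [X_pow_eq_monomial, X_pow_eq_monomial, monomial_mul, one_mul, ← map_natCast C,
      mul_comm, C_mul_monomial, mul_one]
  simp only [hterm, coeff_monomial]
  rcases Nat.eq_zero_or_pos a with rfl | ha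
  · simp [Finsupp.ext_iff, Finsupp.single_apply]
  rw [Finset.sum_eq_single_of_mem (a - 1) (Finset.mem_range.mpr (by omega)),
    if_pos (by rw [Nat.sub_sub_self ha]), Nat.choose_symm ha, Nat.choose_one_right]
  intro k _ hk
  refine if_neg fun heq => hk ?_
  simpa [Finsupp.single_apply, hij.symm] using congr($heq i)

end Transvection

section MonomialIdeal

variable {K : Type*} [Field K] {m : ℕ} {I : Ideal (MvPolynomial (Fin m) K)}

theorem monomial_mem_of_mem_support (hmon : isMonomialIdeal m I)
    {p : MvPolynomial (Fin m) K} (hp : p ∈ I) {β : Fin m →₀ ℕ} (hβ : β ∈ p.support) :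
    monomial β (1 : K) ∈ I := by
  obtain ⟨S, rfl⟩ := hmon
  obtain ⟨s, hs, hsβ⟩ := mem_ideal_span_monomial_image.mp hp β hβ
  exact mem_ideal_span_monomial_image.mpr fun x hx =>
    ⟨s, hs, Finset.mem_singleton.mp (support_monomial_subset hx) ▸ hsβ⟩

theorem borelCond.monomial_add_single_mem (hb : borelCond m I) {γ : Fin m →₀ ℕ}
    {k a : Fin m} (hka : k ≤ a) (h : monomial (γ + Finsupp.single k 1) (1 : K) ∈ I) :
    monomial (γ + Finsupp.single a 1) (1 : K) ∈ I := by
  rcases hka.eq_or_lt with rfl | hlt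
  · exact h
  · simpa using hb _ h k a hlt (by simp)

theorem borelCond.monomial_mul_linearSubst_mem (hb : borelCond m I)
    {g : Matrix (Fin m) (Fin m) K} (htri : ∀ i j : Fin m, i < j → g i j = 0)
    (α γ : Fin m →₀ ℕ) (h : monomial (γ + α) (1 : K) ∈ I) :
    monomial γ 1 * linearSubst g (monomial α 1) ∈ I := by
  classical
  -- Induct on the multiset of variables of `x^α`; `x^γ` collects the substituted ones.
  obtain ⟨s, rfl⟩ : ∃ s : Multiset (Fin m), Multiset.toFinsupp s = α :=
    ⟨_, Finsupp.toMultiset_toFinsupp α⟩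
  induction s using Multiset.induction_on generalizing γ with
  | empty => simpa using h
  | cons k s ih =>
    rw [← Multiset.singleton_add, Multiset.toFinsupp_add, Multiset.toFinsupp_singleton,
      monomial_single_add, pow_one, map_mul, linearSubst_X, Finset.sum_mul, Finset.mul_sum]
    refine Ideal.sum_mem _ fun a _ => ?_
    rcases lt_or_ge a k with hak | hka
    · simp [htri a k hak]
    · rw [smul_mul_assoc, mul_smul_comm, ← mul_assoc, X, monomial_mul, mul_one]
      refine Submodule.smul_of_tower_mem _ _ (ih _ ?_)
      rw [add_right_comm]
      refine hb.monomial_add_single_mem hka ?_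
      rwa [add_right_comm, ← Multiset.toFinsupp_singleton, add_assoc, ← Multiset.toFinsupp_add,
        Multiset.singleton_add]

theorem borelCond.map_linearSubst_le (hmon : isMonomialIdeal m I) (hb : borelCond m I)
    {g : Matrix (Fin m) (Fin m) K} (htri : ∀ i j : Fin m, i < j → g i j = 0) :
    I.map (linearSubst g) ≤ I := by
  obtain ⟨S, hS⟩ := hmon
  conv_lhs => rw [hS]
  rw [Ideal.map_span, Ideal.span_le]
  rintro _ ⟨_, ⟨α, hα, rfl⟩, rfl⟩
  have hαI : monomial α (1 : K) ∈ I := hS ▸ Ideal.subset_span ⟨α, hα, rfl⟩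
  simpa using hb.monomial_mul_linearSubst_mem htri α 0 (by simpa using hαI)


theorem monomial_mem_of_map_transvection_le [CharZero K] (hmon : isMonomialIdeal m I)
    {i j : Fin m}
    (hij : i ≠ j) (hfix : I.map (linearSubst (Matrix.transvection j i (1 : K))) ≤ I)
    {α : Fin m →₀ ℕ} (hα : monomial α (1 : K) ∈ I) (hi : α i ≠ 0) :
    monomial (α - Finsupp.single i 1 + Finsupp.single j 1) (1 : K) ∈ I := by
  set γ := α.erase i
  have hα_eq : α = γ + Finsupp.single i (α i) := (Finsupp.erase_add_single i α).symm
  have hβ_eq : α - Finsupp.single i 1 + Finsupp.single j 1 =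
      γ + (Finsupp.single i (α i - 1) + Finsupp.single j 1) := by
    ext k
    rcases eq_or_ne k i with rfl | hki
    · simp [γ, hij.symm]
    · simp [γ, Finsupp.single_apply, hki]
  have himage : linearSubst (Matrix.transvection j i (1 : K)) (monomial α 1) =
      monomial γ 1 * (X i + X j) ^ (α i) := by
    rw [hα_eq, linearSubst_transvection_monomial j 1 (Finsupp.erase_same ..), one_smul]
    simp only [γ, Finsupp.erase_add_single]
  have hcoeff : coeff (α - Finsupp.single i 1 + Finsupp.single j 1)
      (linearSubst (Matrix.transvection j i (1 : K)) (monomial α 1)) = (α i : K) := by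
    rw [himage, hβ_eq, coeff_monomial_mul, coeff_X_add_X_pow hij, one_mul]
  refine monomial_mem_of_mem_support hmon (hfix (Ideal.mem_map_of_mem _ hα)) ?_
  rw [mem_support_iff, hcoeff]
  exact_mod_cast hi

end MonomialIdeal

/-- A monomial ideal `I` in `K[x_0,...,x_n]` (char K = 0) is Borel-fixed
(fixed under the action of invertible matrices that are upper triangular w.r.t. the
ordering `x_n > ... > x_0`) iff for every monomial `x^α ∈ I`, every `x_i ∣ x^α` and
every `x_j > x_i`, also `(x_j/x_i)·x^α ∈ I`. -/
theorem statement0 {K : Type*} [Field K] [CharZero K] (n : ℕ)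
    (I : Ideal (MvPolynomial (Fin (n+1)) K))
    (hmon : isMonomialIdeal (n+1) I) :
    (∀ g : Matrix (Fin (n+1)) (Fin (n+1)) K, IsUnit g.det →
        (∀ i j : Fin (n+1), i < j → g i j = 0) →
        Ideal.map
          (aeval (fun j : Fin (n+1) => ∑ i, g i j • X i) :
            MvPolynomial (Fin (n+1)) K →ₐ[K] MvPolynomial (Fin (n+1)) K) I = I)
      ↔ borelCond (n+1) I := by
  constructor
  · intro hfix α hα i j hij hi
    have hT := hfix (Matrix.transvection j i 1)
      (by rw [Matrix.det_transvection_of_ne _ _ hij.ne']; exact isUnit_one)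
      fun a b hab => Matrix.transvection_apply_eq_zero_of_lt hij 1 hab
    exact monomial_mem_of_map_transvection_le hmon hij.ne hT.le hα hi
  · intro hb g hdet htri
    change I.map (linearSubst g) = I
    refine Ideal.map_eq_self_of_comp_eq_id (g := linearSubst g⁻¹) ?_
      (hb.map_linearSubst_le hmon htri)
      (hb.map_linearSubst_le hmon fun i j hij => Matrix.inv_apply_eq_zero_of_lt hdet htri hij)
    rw [linearSubst_comp, Matrix.mul_nonsing_inv g hdet, linearSubst_one]
end
end

section
/- Let B be a Borel set in the poset of degree-r monomials of K[x_0,...,x_n] and let x^β be a monomial in B that is minimal for the Borel order and divisible by x_0. Then B \ {x^β} is again a Borel set. -/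
open MvPolynomial Filter

noncomputable section

theorem statement6_general (n : ℕ) (B : Finset (Fin (n+1) →₀ ℕ))
    (hclosed : ∀ α ∈ B, ∀ γ, stepUp n α γ → γ ∈ B)
    (β : Fin (n+1) →₀ ℕ)
    (hmin : ∀ γ ∈ B, borelGE n β γ → γ = β) :
    ∀ α ∈ B.erase β, ∀ γ, stepUp n α γ → γ ∈ B.erase β := by
  intro α hα γ hstep
  obtain ⟨hne, hαB⟩ := Finset.mem_erase.mp hα
  refine Finset.mem_erase.mpr ⟨?_, hclosed α hαB γ hstep⟩
  rintro rfl
  exact hne (hmin α hαB (.single hstep))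

/-- if `B` is a Borel set of degree-`r` monomials and `x^β ∈ B` is
Borel-minimal and divisible by `x_0`, then `B \ {x^β}` is again a Borel set. -/
theorem statement6 (n r : ℕ) (B : Finset (Fin (n+1) →₀ ℕ))
    (hdeg : ∀ α ∈ B, (∑ j, α j) = r)
    (hclosed : ∀ α ∈ B, ∀ γ, stepUp n α γ → γ ∈ B)
    (β : Fin (n+1) →₀ ℕ) (hβ : β ∈ B)
    (hmin : ∀ γ ∈ B, borelGE n β γ → γ = β)
    (h0 : β 0 ≠ 0) :
    ∀ α ∈ B.erase β, ∀ γ, stepUp n α γ → γ ∈ B.erase β :=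
  statement6_general n B hclosed β hmin
end
end

section
/- Let N̄ be an order set (closed under decreasing elementary moves) in the degree-r monomials of K[x_1,...,x_n], and let N be the order set in the degree-r monomials of K[x_0,...,x_n] generated from N̄ by decreasing moves. Then |N| = Σ_{x^α ∈ N̄} (α_1 + 1), where α_1 is the exponent of x_1 in x^α. -/
/-!
A monomial `x^γ` lies in `N` exactly when its image under the substitution `x_0 ↦ x_1` lies
in `N̄`. Indeed, `x^γ` is reached from that image by moves `x_1 → x_0`; conversely, along a
chain of decreasing moves from `N̄`, a move between `x_1` and `x_0` does not change the image,
and any other move is also a move between the images, which stay in `N̄` since it is an order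
set. The fibre of the substitution over `x^α ∈ N̄` is `{(x_0/x_1)^k x^α : 0 ≤ k ≤ α_1}`, of
size `α_1 + 1`.
-/

open MvPolynomial Filter

noncomputable section

/-- The monomial `(x_j/x_i)^k x^γ` (the subtraction truncates when `γ i < k`). -/
def transfer {ι : Type*} [DecidableEq ι] (i j : ι) (k : ℕ) (γ : ι →₀ ℕ) : ι →₀ ℕ :=
  γ - Finsupp.single i k + Finsupp.single j k

/-- The substitution `x_i ↦ x_j` on monomials. -/
def transferAll {ι : Type*} [DecidableEq ι] (i j : ι) (γ : ι →₀ ℕ) : ι →₀ ℕ :=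
  transfer i j (γ i) γ

section Transfer

variable {ι : Type*} [DecidableEq ι] {i j : ι} {k l : ℕ} {γ : ι →₀ ℕ}

theorem transfer_apply (a : ι) :
    transfer i j k γ a = γ a - (if i = a then k else 0) + (if j = a then k else 0) := by
  simp [transfer, Finsupp.single_apply]

@[simp]
theorem transfer_zero : transfer i j 0 γ = γ := by
  simp [transfer]

theorem transfer_apply_left (hij : i ≠ j) : transfer i j k γ i = γ i - k := by
  simp [transfer_apply, hij.symm]

theorem transfer_apply_right (hij : i ≠ j) : transfer i j k γ j = γ j + k := by
  simp [transfer_apply, hij]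

theorem transfer_transfer_swap (hk : k ≤ γ i) : transfer j i k (transfer i j k γ) = γ := by
  ext a
  simp only [transfer_apply]
  split_ifs <;> subst_vars <;> omega

theorem transfer_add (hij : i ≠ j) (hkl : k + l ≤ γ i) :
    transfer i j (k + l) γ = transfer i j l (transfer i j k γ) := by
  ext a
  simp only [transfer_apply]
  split_ifs <;> subst_vars <;> omega

theorem transferAll_transfer {α : ι →₀ ℕ} (hij : i ≠ j) (hα : α i = 0) (hk : k ≤ α j) :
    transferAll i j (transfer j i k α) = α := by
  rw [transferAll, transfer_apply_right hij.symm, hα, zero_add, transfer_transfer_swap hk]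

theorem ncard_transferAll_preimage (hij : i ≠ j) (A : Finset (ι →₀ ℕ))
    (hA : ∀ α ∈ A, α i = 0) :
    {γ | transferAll i j γ ∈ A}.ncard = ∑ α ∈ A, (α j + 1) := by
  let S := A.sigma fun α => Finset.range (α j + 1)
  have hS : {γ | transferAll i j γ ∈ A} = ↑(S.image fun p => transfer j i p.2 p.1) := by
    ext γ
    simp only [Set.mem_ofPred_eq, Finset.coe_image, Set.mem_image, Finset.mem_coe, S,
      Finset.mem_sigma, Finset.mem_range, Sigma.exists]
    constructor
    · intro hγ
      refine ⟨transferAll i j γ, γ i, ⟨hγ, ?_⟩, transfer_transfer_swap le_rfl⟩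
      rw [transferAll, transfer_apply_right hij]
      omega
    · rintro ⟨α, k, ⟨hα, hk⟩, rfl⟩
      rwa [transferAll_transfer hij (hA α hα) (Nat.lt_succ_iff.mp hk)]
  have hinj : Set.InjOn (fun p : Σ _ : ι →₀ ℕ, ℕ => transfer j i p.2 p.1) S := by
    rintro ⟨α, k⟩ hp ⟨β, l⟩ hq he
    simp only [S, Finset.mem_coe, Finset.mem_sigma, Finset.mem_range] at hp hq
    have hαβ : α = β := by
      rw [← transferAll_transfer hij (hA α hp.1) (Nat.lt_succ_iff.mp hp.2),
        ← transferAll_transfer hij (hA β hq.1) (Nat.lt_succ_iff.mp hq.2)]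
      exact congrArg _ he
    have hkl : k = l := by
      have := DFunLike.congr_fun he i
      simp only [transfer_apply_right hij.symm, hA α hp.1, hA β hq.1] at this
      omega
    subst hαβ hkl
    rfl
  rw [hS, Set.ncard_coe_finset, Finset.card_image_of_injOn hinj, Finset.card_sigma]
  simp

end Transfer

section Borel

theorem stepUp_iff {n : ℕ} {α β : Fin (n+1) →₀ ℕ} :
    stepUp n α β ↔ ∃ i : Fin n, α i.castSucc ≠ 0 ∧ β = transfer i.castSucc i.succ 1 α :=
  Iff.rfl

variable {n : ℕ} [NeZero n]

theorem reflTransGen_stepUp_transfer_zero_one {γ : Fin (n+1) →₀ ℕ} {k : ℕ} (hk : k ≤ γ 0) :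
    Relation.ReflTransGen (stepUp n) γ (transfer 0 1 k γ) := by
  induction k with
  | zero => simpa using Relation.ReflTransGen.refl
  | succ k ih =>
    rw [transfer_add Fin.zero_ne_one' hk]
    refine (ih (by omega)).tail (stepUp_iff.mpr ⟨0, ?_, ?_⟩)
    · rw [Fin.castSucc_zero', transfer_apply_left Fin.zero_ne_one']
      omega
    · rw [Fin.castSucc_zero', Fin.succ_zero_eq_one']

theorem transferAll_eq_or_stepUp {γ δ : Fin (n+1) →₀ ℕ} (h : stepUp n γ δ) :
    transferAll 0 1 γ = transferAll 0 1 δ ∨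
      stepUp n (transferAll 0 1 γ) (transferAll 0 1 δ) := by
  obtain ⟨u, hu, rfl⟩ := stepUp_iff.mp h
  have h01 : (0 : Fin (n+1)) ≠ 1 := Fin.zero_ne_one'
  rcases eq_or_ne u.castSucc 0 with hu0 | hu0
  · left
    obtain rfl := Fin.castSucc_eq_zero_iff.mp hu0
    simp only [Fin.castSucc_zero', Fin.succ_zero_eq_one'] at hu ⊢
    ext a
    simp only [transferAll, transfer_apply]
    split_ifs <;> subst_vars <;> omega
  · right
    have hlt : u.castSucc < u.succ := Fin.castSucc_lt_succ
    have hsu : u.succ ≠ 0 := Fin.succ_ne_zero u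
    refine stepUp_iff.mpr ⟨u, ?_, ?_⟩
    · simp only [transferAll, transfer_apply]
      split_ifs <;> omega
    · ext a
      simp only [transferAll, transfer_apply]
      split_ifs <;> subst_vars <;> omega

theorem transferAll_zero_one_apply_zero (γ : Fin (n+1) →₀ ℕ) : transferAll 0 1 γ 0 = 0 := by
  simp [transferAll, transfer_apply_left Fin.zero_ne_one']

theorem exists_borelGE_iff_transferAll_mem {Nbar : Finset (Fin (n+1) →₀ ℕ)}
    (hNbar : ∀ α ∈ Nbar, α 0 = 0)
    (hdown : ∀ α ∈ Nbar, ∀ β : Fin (n+1) →₀ ℕ, stepUp n β α → β 0 = 0 → β ∈ Nbar)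
    (γ : Fin (n+1) →₀ ℕ) :
    (∃ α ∈ Nbar, borelGE n α γ) ↔ transferAll 0 1 γ ∈ Nbar := by
  constructor
  · rintro ⟨α, hα, h⟩
    induction h using Relation.ReflTransGen.head_induction_on with
    | refl => rwa [transferAll, hNbar α hα, transfer_zero]
    | head hstep _ ih =>
      rcases transferAll_eq_or_stepUp hstep with heq | hup
      · rwa [heq]
      · exact hdown _ ih _ hup (transferAll_zero_one_apply_zero _)
  · intro h
    exact ⟨_, h, reflTransGen_stepUp_transfer_zero_one le_rfl⟩

end Borel

/-- counting lemma: `N̄` an order set in the degree-`r` monomials of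
`K[x_1,...,x_n]` (exponent vectors with `α 0 = 0`), `N` the order set it generates by
decreasing moves in `K[x_0,...,x_n]`. Then `|N| = Σ_{x^α ∈ N̄} (α_1 + 1)`. -/
theorem statement11 (n r : ℕ) (hn : 0 < n)
    (Nbar : Finset (Fin (n+1) →₀ ℕ))
    (hNbar : ∀ α ∈ Nbar, (∑ j, α j) = r ∧ α 0 = 0)
    (hdown : ∀ α ∈ Nbar, ∀ β : Fin (n+1) →₀ ℕ, stepUp n β α → β 0 = 0 → β ∈ Nbar) :
    {γ : Fin (n+1) →₀ ℕ | ∃ α ∈ Nbar, borelGE n α γ}.ncard =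
      ∑ α ∈ Nbar, (α 1 + 1) := by
  have : NeZero n := NeZero.of_pos hn
  have hNbar0 : ∀ α ∈ Nbar, α 0 = 0 := fun α hα => (hNbar α hα).2
  simp_rw [exists_borelGE_iff_transferAll_mem hNbar0 hdown]
  exact ncard_transferAll_preimage Fin.zero_ne_one' Nbar hNbar0
end
end

section
/- Constant Hilbert polynomial case of the bijection: if B is a Borel set in the degree-r monomials of K[x_0,...,x_n] whose complement N has cardinality c ≤ r and every monomial of N is divisible by x_0, then the quotient K[x_0,...,x_n]/⟨B⟩^sat has constant Hilbert polynomial equal to c. -/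
/-!
Borel-closedness lets one trade any power of `x_0` (the smallest variable) for an arbitrary
monomial of the same degree, so `⟨B⟩^sat` is generated by the elements of `B` with `x_0` set
to `1`. For `t ≥ r` multiplication by `x_0^(t-r)` then maps `N` bijectively onto the degree-`t`
monomials outside `⟨B⟩^sat`: surjectivity is where every element of `N` being divisible by
`x_0` enters, since it forces the `x_0`-free part of such a monomial to have degree `< r`.
-/

open MvPolynomial Filter

noncomputable section

theorem Finsupp.exists_between_degree_eq {σ : Type*} {ρ μ : σ →₀ ℕ} (hρμ : ρ ≤ μ) {k : ℕ}
    (hρ : ρ.degree ≤ k) (hμ : k ≤ μ.degree) : ∃ g, ρ ≤ g ∧ g ≤ μ ∧ g.degree = k := by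
  obtain ⟨d, rfl⟩ := le_iff_exists_add.mp hρμ
  rw [map_add] at hμ
  obtain ⟨g, hg, hgdeg⟩ := d.exists_le_degree_eq (k - ρ.degree) (by omega)
  exact ⟨ρ + g, le_self_add, add_le_add_right hg ρ, by rw [map_add, hgdeg]; omega⟩

theorem Finsupp.erase_le {σ : Type*} (f : σ →₀ ℕ) (i : σ) : f.erase i ≤ f :=
  le_iff_exists_add.mpr ⟨_, (Finsupp.erase_add_single i f).symm⟩

theorem Finsupp.erase_le_of_le_add_single {σ : Type*} {f g : σ →₀ ℕ} {i : σ} {k : ℕ}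
    (h : f ≤ g + Finsupp.single i k) : f.erase i ≤ g := by
  intro a
  rcases eq_or_ne a i with rfl | ha
  · simp
  · simpa [Finsupp.erase_ne ha, Finsupp.single_eq_of_ne ha] using h a

section MonomialIdeal

variable {K : Type*} [Field K]

theorem finrank_supported_eq_ncard {σ : Type*} {s : Set (σ →₀ ℕ)} (hs : s.Finite) :
    Module.finrank K (AddMonoidAlgebra.supported K K s : Submodule K (MvPolynomial σ K)) =
      s.ncard := by
  have := hs.fintype
  rw [LinearEquiv.finrank_eq (AddMonoidAlgebra.supportedEquivFinsupp s),
    Module.finrank_finsupp_self, Set.ncard_eq_toFinset_card', Set.toFinset_card]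

theorem span_monomial_inf_homogeneousSubmodule {σ : Type*} (S : Set (σ →₀ ℕ)) (t : ℕ) :
    (Ideal.span ((fun s => monomial s (1 : K)) '' S)).restrictScalars K ⊓
        homogeneousSubmodule σ K t =
      AddMonoidAlgebra.supported K K {μ | μ.degree = t ∧ ∃ s ∈ S, s ≤ μ} := by
  ext p
  simp only [Submodule.mem_inf, Submodule.restrictScalars_mem, mem_ideal_span_monomial_image,
    homogeneousSubmodule_eq_finsupp_supported, AddMonoidAlgebra.mem_supported, Set.subset_def,
    Finset.mem_coe, Set.mem_ofPred_eq]
  exact ⟨fun h μ hμ => ⟨h.2 μ hμ, h.1 μ hμ⟩,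
    fun h => ⟨fun μ hμ => (h μ hμ).2, fun μ hμ => (h μ hμ).1⟩⟩

theorem hilb_span_monomial {m : ℕ} (S : Set (Fin m →₀ ℕ)) (t : ℕ) :
    hilb m (Ideal.span ((fun s => monomial s (1 : K)) '' S)) t =
      {μ : Fin m →₀ ℕ | μ.degree = t ∧ ∀ s ∈ S, ¬ s ≤ μ}.ncard := by
  have hfin := Finsupp.finite_of_degree_eq (σ := Fin m) t
  have hsub : {μ : Fin m →₀ ℕ | μ.degree = t ∧ ∃ s ∈ S, s ≤ μ} ⊆ {μ | μ.degree = t} :=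
    fun _ hμ => hμ.1
  have hdiff : {μ : Fin m →₀ ℕ | μ.degree = t ∧ ∀ s ∈ S, ¬ s ≤ μ} =
      {μ | μ.degree = t} \ {μ | μ.degree = t ∧ ∃ s ∈ S, s ≤ μ} := by
    ext μ
    simp +contextual
  rw [hilb, span_monomial_inf_homogeneousSubmodule, homogeneousSubmodule_eq_finsupp_supported,
    finrank_supported_eq_ncard hfin, finrank_supported_eq_ncard (hfin.subset hsub), hdiff,
    Set.ncard_sdiff hsub (hfin.subset hsub), Nat.cast_sub (Set.ncard_le_ncard hsub hfin)]

end MonomialIdeal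

def IsBorel (n : ℕ) (B : Set (Fin (n+1) →₀ ℕ)) : Prop :=
  ∀ α ∈ B, ∀ γ, stepUp n α γ → γ ∈ B

namespace IsBorel

variable {n : ℕ} {B : Set (Fin (n+1) →₀ ℕ)}

theorem add_single_mem (hB : IsBorel n B) {α : Fin (n+1) →₀ ℕ}
    (hα : α + Finsupp.single 0 1 ∈ B) (j : Fin (n+1)) : α + Finsupp.single j 1 ∈ B := by
  induction j using Fin.induction with
  | zero => exact hα
  | succ i ih =>
    have hstep : stepUp n (α + Finsupp.single i.castSucc 1) (α + Finsupp.single i.succ 1) :=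
      ⟨i, by simp, by rw [add_tsub_cancel_right]⟩
    exact hB _ ih _ hstep

theorem add_mem_of_add_single_degree_mem (hB : IsBorel n B) (δ : Fin (n+1) →₀ ℕ) :
    ∀ α, α + Finsupp.single 0 δ.degree ∈ B → α + δ ∈ B := by
  induction δ using Finsupp.induction_linear with
  | zero => simp
  | add f g hf hg =>
    intro α hα
    rw [map_add, Finsupp.single_add, add_comm (Finsupp.single 0 _), ← add_assoc] at hα
    have hf' := hf _ hα
    rw [add_right_comm] at hf'
    simpa only [add_assoc] using hg _ hf'
  | single j b =>
    rw [Finsupp.degree_single]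
    induction b with
    | zero => simp
    | succ b ih =>
      intro α hα
      rw [Finsupp.single_add, ← add_assoc] at hα ⊢
      have hmoved := hB.add_single_mem hα j
      rw [add_right_comm] at hmoved ⊢
      exact ih _ hmoved

theorem mem_of_erase_le (hB : IsBorel n B) {β γ : Fin (n+1) →₀ ℕ} (hβ : β ∈ B)
    (hle : β.erase 0 ≤ γ) (hdeg : γ.degree = β.degree) : γ ∈ B := by
  have hδ : (γ - β.erase 0).degree = β 0 := by
    have h₁ := map_add Finsupp.degree (β.erase 0) (γ - β.erase 0)
    have h₂ := map_add Finsupp.degree (β.erase 0) (Finsupp.single 0 (β 0))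
    rw [add_tsub_cancel_of_le hle] at h₁
    rw [Finsupp.erase_add_single, Finsupp.degree_single] at h₂
    omega
  have hmem := hB.add_mem_of_add_single_degree_mem (γ - β.erase 0) (β.erase 0)
    (by rwa [hδ, Finsupp.erase_add_single])
  rwa [add_tsub_cancel_of_le hle] at hmem

theorem exists_mem_le_of_erase_le (hB : IsBorel n B) {r : ℕ}
    (hdeg : ∀ α ∈ B, α.degree = r) {β μ : Fin (n+1) →₀ ℕ} (hβ : β ∈ B)
    (hle : β.erase 0 ≤ μ) (hr : r ≤ μ.degree) : ∃ γ ∈ B, γ ≤ μ := by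
  obtain ⟨γ, hβγ, hγμ, hγ⟩ := Finsupp.exists_between_degree_eq hle
    (hdeg β hβ ▸ Finsupp.degree_mono (β.erase_le 0)) hr
  exact ⟨γ, hB.mem_of_erase_le hβ hβγ (hγ.trans (hdeg β hβ).symm), hγμ⟩

theorem sat_span_monomial {K : Type*} [Field K] {r : ℕ} (hB : IsBorel n B)
    (hdeg : ∀ α ∈ B, α.degree = r) :
    sat (n+1) (Ideal.span ((fun γ => monomial γ (1 : K)) '' B)) =
      Ideal.span ((fun γ => monomial γ (1 : K)) '' ((fun β => β.erase 0) '' B)) := by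
  refine le_antisymm (iSup_le fun k p hp => ?_) (Ideal.span_le.mpr ?_)
  · have hpX : p * X 0 ^ k ∈ Ideal.span ((fun γ => monomial γ (1 : K)) '' B) := by
      simpa [smul_eq_mul] using Submodule.mem_colon.mp hp _
        (Ideal.pow_mem_pow (Ideal.subset_span (Set.mem_range_self 0)) k)
    rw [mem_ideal_span_monomial_image] at hpX ⊢
    intro μ hμ
    obtain ⟨β, hβ, hle⟩ := hpX (μ + Finsupp.single 0 k) (by
      rwa [mem_support_iff, X_pow_eq_monomial, coeff_mul_monomial, mul_one, ← mem_support_iff])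
    exact ⟨β.erase 0, ⟨β, hβ, rfl⟩, Finsupp.erase_le_of_le_add_single hle⟩
  · rintro _ ⟨_, ⟨β, hβ, rfl⟩, rfl⟩
    refine Submodule.mem_iSup_of_mem r (Submodule.mem_colon.mpr fun p hp => ?_)
    rw [smul_eq_mul, mem_ideal_span_monomial_image]
    intro μ hμ
    rw [mem_support_iff, coeff_monomial_mul'] at hμ
    split_ifs at hμ with hle
    · refine hB.exists_mem_le_of_erase_le hdeg hβ hle ?_
      have hr := (mem_pow_idealOfVars_iff r p).mp hp (μ - β.erase 0)
        (mem_support_iff.mpr (by simpa using hμ))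
      exact hr.trans (Finsupp.degree_mono tsub_le_self)
    · exact absurd rfl hμ

theorem standardMonomials_eq_image {r t : ℕ} (hB : IsBorel n B)
    (hdeg : ∀ α ∈ B, α.degree = r)
    (hdiv : ∀ γ : Fin (n+1) →₀ ℕ, γ.degree = r → γ ∉ B → γ 0 ≠ 0) (ht : r ≤ t) :
    {μ : Fin (n+1) →₀ ℕ | μ.degree = t ∧ ∀ s ∈ (fun β => β.erase 0) '' B, ¬ s ≤ μ} =
      (· + Finsupp.single 0 (t - r)) '' {γ | γ.degree = r ∧ γ ∉ B} := by
  ext μ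
  simp only [Set.mem_ofPred_eq, Set.mem_image, forall_exists_index, and_imp,
    forall_apply_eq_imp_iff₂]
  constructor
  · rintro ⟨hμ, hfree⟩
    have hsplit := Finsupp.erase_add_single 0 μ
    have hμdeg := map_add Finsupp.degree (μ.erase 0) (Finsupp.single 0 (μ 0))
    rw [hsplit, Finsupp.degree_single] at hμdeg
    -- a degree-`r` monomial below `μ.erase 0` is free of `x_0`, so `hdiv` puts it in `B`
    have hlt : (μ.erase 0).degree < r := by
      by_contra! hr
      obtain ⟨g, hg, hgdeg⟩ := (μ.erase 0).exists_le_degree_eq r hr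
      have hg0 : g 0 = 0 := by simpa using hg 0
      have hgB : g ∈ B := by_contra fun h => hdiv g hgdeg h hg0
      exact hfree g hgB (((g.erase_le 0).trans hg).trans (μ.erase_le 0))
    refine ⟨μ.erase 0 + Finsupp.single 0 (r - (μ.erase 0).degree), ⟨?_, fun hB' => ?_⟩, ?_⟩
    · rw [map_add, Finsupp.degree_single]; omega
    · exact hfree _ hB' (Finsupp.erase_le_of_le_add_single
        (add_le_add_left (μ.erase_le 0) _))
    · conv_rhs => rw [← hsplit]
      rw [add_assoc, ← Finsupp.single_add]
      congr 2
      omega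
  · rintro ⟨γ, ⟨hγ, hγB⟩, rfl⟩
    refine ⟨by rw [map_add, hγ, Finsupp.degree_single]; omega, fun β hβ hle => hγB ?_⟩
    have hle' := Finsupp.erase_le_of_le_add_single hle
    rw [Finsupp.erase_idem] at hle'
    exact hB.mem_of_erase_le hβ hle' (hγ.trans (hdeg β hβ).symm)

end IsBorel

theorem statement15_general {K : Type*} [Field K] (n r c : ℕ)
    (B : Finset (Fin (n+1) →₀ ℕ))
    (hdeg : ∀ α ∈ B, (∑ j, α j) = r)
    (hclosed : ∀ α ∈ B, ∀ γ, stepUp n α γ → γ ∈ B)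
    (hcard : {γ : Fin (n+1) →₀ ℕ | (∑ j, γ j) = r ∧ γ ∉ B}.ncard = c)
    (hdiv : ∀ γ : Fin (n+1) →₀ ℕ, (∑ j, γ j) = r → γ ∉ B → γ 0 ≠ 0) :
    ∀ᶠ t : ℕ in atTop,
      hilb (n+1) (sat (n+1) (Ideal.span ((fun γ => monomial γ (1:K)) '' (B : Finset _)))) t
        = (c : ℤ) := by
  simp only [← Finsupp.degree_eq_sum] at hdeg hcard hdiv
  have hB : IsBorel n B := hclosed
  filter_upwards [eventually_ge_atTop r] with t ht
  rw [hB.sat_span_monomial hdeg, hilb_span_monomial, hB.standardMonomials_eq_image hdeg hdiv ht,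
    Set.ncard_image_of_injective _ (add_left_injective _)]
  exact_mod_cast hcard

/-- constant Hilbert polynomial case: if `B` is a Borel set of
degree-`r` monomials whose complement `N` has cardinality `c ≤ r` and every monomial
of `N` is divisible by `x_0`, then `K[x_0,...,x_n]/⟨B⟩^sat` has constant Hilbert
polynomial equal to `c`. -/
theorem statement15 {K : Type*} [Field K] [CharZero K] (n r c : ℕ)
    (B : Finset (Fin (n+1) →₀ ℕ))
    (hdeg : ∀ α ∈ B, (∑ j, α j) = r)
    (hclosed : ∀ α ∈ B, ∀ γ, stepUp n α γ → γ ∈ B)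
    (hcard : {γ : Fin (n+1) →₀ ℕ | (∑ j, γ j) = r ∧ γ ∉ B}.ncard = c)
    (hcr : c ≤ r)
    (hdiv : ∀ γ : Fin (n+1) →₀ ℕ, (∑ j, γ j) = r → γ ∉ B → γ 0 ≠ 0) :
    ∀ᶠ t : ℕ in atTop,
      hilb (n+1) (sat (n+1) (Ideal.span ((fun γ => monomial γ (1:K)) '' (B : Finset _)))) t
        = (c : ℤ) :=
  statement15_general n r c B hdeg hclosed hcard hdiv
end
end
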